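/- arXiv:1609.03999 — 3 statements merged into one kernel-verified Lean document; each statement's English description precedes it below -/
import Mathlib

section
/- Let S be a nonnegative random variable whose tail P(S > x) is regularly varying of index α for some α > 0, let λ₁,…,λ_K ≥ 0 with λ̄ = ∑_{j=1}^K λ_j > 0, and let N₁,…,N_K be ℕ-valued random variables that are conditionally independent given S, with N_j conditionally Poisson with mean λ_j S given S. Then: (a) P(S + N₁ + ⋯ + N_K > x) ∼ P((1 + λ̄)S > x) as x → ∞; and (b) given S + N₁ + ⋯ + N_K > x, the vector (S, N₁, …, N_K)/(S + N₁ + ⋯ + N_K) converges in conditional probability to the constant vector (1, λ₁, …, λ_K)/(1 + λ̄): for every ε > 0, P(‖(S, N₁,…,N_K)/(S+N₁+⋯+N_K) − (1, λ₁,…,λ_K)/(1+λ̄)‖ > ε | S + N₁ + ⋯ + N_K > x) → 0 as x → ∞. -/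
open MeasureTheory Filter

/-- `N₁, …, N_K` are conditionally independent given `S`, with `Nⱼ` conditionally
Poisson of mean `λⱼ S`: for every Borel `A` and all `k₁, …, k_K ∈ ℕ`,
`P(S ∈ A, N₁ = k₁, …, N_K = k_K) = E[1_A(S) ∏ⱼ e^{-λⱼS}(λⱼS)^{kⱼ}/kⱼ!]`. -/
def CondPoissonVec {Ω : Type*} [MeasurableSpace Ω] (μ : Measure Ω)
    (S : Ω → ℝ) {K : ℕ} (lam : Fin K → ℝ) (N : Fin K → Ω → ℕ) : Prop :=
  ∀ A : Set ℝ, MeasurableSet A → ∀ k : Fin K → ℕ,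
    (μ {ω | S ω ∈ A ∧ ∀ j, N j ω = k j}).toReal
      = ∫ ω, Set.indicator A (fun _ => (1 : ℝ)) (S ω) *
          ∏ j, Real.exp (-(lam j) * S ω) * (lam j * S ω) ^ (k j)
            / (Nat.factorial (k j)) ∂μ

/-- The tail of `S` is regularly varying of index `α > 0`: `P(S > x) > 0` for all `x` and
`P(S > t x)/P(S > x) → t^{-α}` as `x → ∞` for every `t > 0`. -/
def RegVaryingTailRV {Ω : Type*} [MeasurableSpace Ω] (μ : Measure Ω)
    (S : Ω → ℝ) (α : ℝ) : Prop :=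
  (∀ x : ℝ, 0 < (μ {ω | x < S ω}).toReal) ∧
  ∀ t : ℝ, 0 < t →
    Tendsto (fun x => (μ {ω | t * x < S ω}).toReal / (μ {ω | x < S ω}).toReal)
      atTop (nhds (t ^ (-α)))

lemma pmf_nonneg {m : ℝ} (hm : 0 ≤ m) (n : ℕ) : 0 ≤ Real.exp (-m) * m ^ n / n.factorial := by
  positivity

lemma pow_div_fact_le_exp {m : ℝ} (hm : 0 ≤ m) (n : ℕ) : m ^ n / n.factorial ≤ Real.exp m := by
  calc m ^ n / n.factorial ≤ ∑ i ∈ Finset.range (n+1), m ^ i / i.factorial := by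
        refine Finset.single_le_sum (f := fun i => m ^ i / (i.factorial : ℝ)) ?_ ?_
        · intro i _; positivity
        · simp
    _ ≤ Real.exp m := Real.sum_le_exp_of_nonneg hm _

lemma pmf_le_one {m : ℝ} (hm : 0 ≤ m) (n : ℕ) : Real.exp (-m) * m ^ n / n.factorial ≤ 1 := by
  have h := pow_div_fact_le_exp hm n
  have : Real.exp (-m) * m ^ n / n.factorial = Real.exp (-m) * (m ^ n / n.factorial) := by ring
  rw [this]
  calc Real.exp (-m) * (m ^ n / n.factorial) ≤ Real.exp (-m) * Real.exp m := by
        exact mul_le_mul_of_nonneg_left h (le_of_lt (Real.exp_pos _))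
    _ = 1 := by rw [← Real.exp_add]; simp

lemma tsum_pi_prod : ∀ {K : ℕ} (f : Fin K → ℕ → ENNReal),
    ∑' k : Fin K → ℕ, ∏ j, f j (k j) = ∏ j, ∑' n, f j n := by
  intro K
  induction K with
  | zero =>
    intro f
    simp only [Finset.univ_eq_empty, Finset.prod_empty]
    exact tsum_eq_single default (fun b hb => absurd (Subsingleton.elim b default) hb)
  | succ K ih =>
    intro f
    have he := (Fin.consEquiv (fun _ : Fin (K+1) => ℕ)).tsum_eq (fun k => ∏ j, f j (k j))
    have : ∀ p : ℕ × (Fin K → ℕ),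
        (∏ j, f j ((Fin.consEquiv (fun _ : Fin (K+1) => ℕ)) p j))
          = f 0 p.1 * ∏ j : Fin K, f j.succ (p.2 j) := by
      intro p
      rw [Fin.prod_univ_succ]
      simp only [Fin.consEquiv, Equiv.coe_fn_mk, Fin.cons_zero, Fin.cons_succ]
    calc ∑' k : Fin (K+1) → ℕ, ∏ j, f j (k j)
        = ∑' p : ℕ × (Fin K → ℕ), f 0 p.1 * ∏ j : Fin K, f j.succ (p.2 j) := by
          rw [← he]; exact tsum_congr this
      _ = ∑' a : ℕ, ∑' b : Fin K → ℕ, f 0 a * ∏ j : Fin K, f j.succ (b j) :=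
          ENNReal.tsum_prod'
      _ = (∑' a : ℕ, f 0 a) * ∑' b : Fin K → ℕ, ∏ j : Fin K, f j.succ (b j) := by
          simp_rw [ENNReal.tsum_mul_left]; rw [ENNReal.tsum_mul_right]
      _ = ∏ j, ∑' n, f j n := by
          rw [ih (fun j n => f j.succ n), Fin.prod_univ_succ]

lemma mgf_ennreal (θ : ℝ) {m : ℝ} (hm : 0 ≤ m) :
    ∑' n : ℕ, ENNReal.ofReal (Real.exp (θ * n) * (Real.exp (-m) * m ^ n / n.factorial))
      = ENNReal.ofReal (Real.exp (m * (Real.exp θ - 1))) := by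
  have h1 : ∀ n : ℕ, Real.exp (θ * n) * (Real.exp (-m) * m ^ n / n.factorial)
      = Real.exp (-m) * ((m * Real.exp θ) ^ n / n.factorial) := by
    intro n
    rw [mul_comm θ (n:ℝ), Real.exp_nat_mul, mul_pow]
    ring
  simp_rw [h1]
  have h2 : ∀ n : ℕ, (0:ℝ) ≤ (m * Real.exp θ) ^ n / n.factorial := by
    intro n; positivity
  rw [show (fun n : ℕ => ENNReal.ofReal (Real.exp (-m) * ((m * Real.exp θ) ^ n / n.factorial)))
      = fun n : ℕ => ENNReal.ofReal (Real.exp (-m)) * ENNReal.ofReal ((m * Real.exp θ) ^ n / n.factorial) from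
      funext fun n => ENNReal.ofReal_mul (le_of_lt (Real.exp_pos _))]
  rw [ENNReal.tsum_mul_left, ← ENNReal.ofReal_tsum_of_nonneg h2 (Real.summable_pow_div_factorial _)]
  have h3 : ∑' n : ℕ, (m * Real.exp θ) ^ n / (n.factorial : ℝ) = Real.exp (m * Real.exp θ) := by
    rw [Real.exp_eq_exp_ℝ, NormedSpace.exp_eq_tsum_div]
  rw [h3, ← ENNReal.ofReal_mul (le_of_lt (Real.exp_pos _)), ← Real.exp_add]
  ring_nf

lemma core {Ω : Type*} [MeasurableSpace Ω] (μ : Measure Ω) [IsProbabilityMeasure μ]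
    (S : Ω → ℝ) (hSmeas : Measurable S) (hSnonneg : ∀ ω, 0 ≤ S ω)
    {K : ℕ} (lam : Fin K → ℝ) (hlam : ∀ j, 0 ≤ lam j)
    (N : Fin K → Ω → ℕ) (hNmeas : ∀ j, Measurable (N j))
    (hN : CondPoissonVec μ S lam N)
    (C : ℝ → (Fin K → ℕ) → Prop) (hC : ∀ k, MeasurableSet {s | C s k})
    (θ : Fin K → ℝ) (r : ℝ → ℝ) (β : ℝ)
    (htilt : ∀ s k, 0 ≤ s → C s k → r s ≤ ∑ j, θ j * (k j : ℝ))
    (hβ : ∀ s, 0 ≤ s → (∃ k, C s k) → (∑ j, lam j * s * (Real.exp (θ j) - 1)) - r s ≤ β) :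
    (μ {ω | C (S ω) (fun j => N j ω)}).toReal ≤ Real.exp β := by
  classical
  set E : (Fin K → ℕ) → Set Ω := fun k => {ω | S ω ∈ {s | C s k} ∧ ∀ j, N j ω = k j} with hE
  -- the pmf-type integrand
  set f : (Fin K → ℕ) → Ω → ℝ := fun k ω =>
    Set.indicator {s | C s k} (fun _ => (1 : ℝ)) (S ω) *
      ∏ j, Real.exp (-(lam j) * S ω) * (lam j * S ω) ^ (k j) / (Nat.factorial (k j)) with hf
  have hprod_nonneg : ∀ (k : Fin K → ℕ) (ω : Ω),
      0 ≤ ∏ j, Real.exp (-(lam j) * S ω) * (lam j * S ω) ^ (k j) / (Nat.factorial (k j)) := by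
    intro k ω
    apply Finset.prod_nonneg
    intro j _
    have h1 : 0 ≤ lam j * S ω := mul_nonneg (hlam j) (hSnonneg ω)
    positivity
  have hprod_le_one : ∀ (k : Fin K → ℕ) (ω : Ω),
      (∏ j, Real.exp (-(lam j) * S ω) * (lam j * S ω) ^ (k j) / (Nat.factorial (k j))) ≤ 1 := by
    intro k ω
    apply Finset.prod_le_one
    · intro j _
      have h1 : 0 ≤ lam j * S ω := mul_nonneg (hlam j) (hSnonneg ω)
      positivity
    · intro j _
      have h1 : 0 ≤ lam j * S ω := mul_nonneg (hlam j) (hSnonneg ω)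
      have := pmf_le_one h1 (k j)
      rwa [neg_mul] 
  have hf_nonneg : ∀ k ω, 0 ≤ f k ω := by
    intro k ω
    apply mul_nonneg _ (hprod_nonneg k ω)
    exact Set.indicator_nonneg (fun _ _ => zero_le_one) _
  have hf_le_one : ∀ k ω, f k ω ≤ 1 := by
    intro k ω
    have h2 := hprod_le_one k ω
    have h3 : Set.indicator {s | C s k} (fun _ => (1:ℝ)) (S ω) ≤ 1 := by
      by_cases h : S ω ∈ {s | C s k} <;>
        simp [Set.indicator_of_mem, Set.indicator_of_notMem, h]
    calc f k ω ≤ 1 * 1 := mul_le_mul h3 h2 (hprod_nonneg k ω) zero_le_one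
      _ = 1 := one_mul 1
  have hf_meas : ∀ k, Measurable (f k) := by
    intro k
    apply Measurable.mul
    · exact (measurable_const.indicator (hC k)).comp hSmeas
    · apply Finset.measurable_prod
      intro j _
      apply Measurable.div_const
      apply Measurable.mul
      · exact Real.measurable_exp.comp (hSmeas.const_mul _)
      · exact (hSmeas.const_mul _).pow_const _
  have hf_int : ∀ k, Integrable (f k) μ := by
    intro k
    refine Integrable.mono' (integrable_const 1) (hf_meas k).aestronglyMeasurable ?_
    filter_upwards with ω
    rw [Real.norm_eq_abs, abs_of_nonneg (hf_nonneg k ω)]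
    exact hf_le_one k ω
  -- decomposition
  have hEq : {ω | C (S ω) (fun j => N j ω)} = ⋃ k, E k := by
    ext ω
    simp only [Set.mem_setOf_eq, Set.mem_iUnion, hE]
    constructor
    · intro h; exact ⟨fun j => N j ω, h, fun j => rfl⟩
    · rintro ⟨k, h1, h2⟩
      have : (fun j => N j ω) = k := funext h2
      rwa [this]
  have hEmeas : ∀ k, MeasurableSet (E k) := by
    intro k
    have : E k = S ⁻¹' {s | C s k} ∩ ⋂ j, (N j) ⁻¹' {k j} := by
      ext ω; simp [hE, Set.mem_iInter]
    rw [this]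
    exact (hSmeas (hC k)).inter (MeasurableSet.iInter fun j => (hNmeas j) (measurableSet_singleton _))
  have hdisj : Pairwise (Function.onFun Disjoint E) := by
    intro k k' hne
    rw [Function.onFun, Set.disjoint_left]
    intro ω h1 h2
    exact hne (funext fun j => (h1.2 j).symm.trans (h2.2 j))
  have hsum : μ {ω | C (S ω) (fun j => N j ω)} = ∑' k, μ (E k) := by
    rw [hEq]; exact measure_iUnion hdisj hEmeas
  have hEk : ∀ k, μ (E k) = ∫⁻ ω, ENNReal.ofReal (f k ω) ∂μ := by
    intro k
    have h1 : (μ (E k)).toReal = ∫ ω, f k ω ∂μ := hN {s | C s k} (hC k) k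
    have h2 : μ (E k) = ENNReal.ofReal ((μ (E k)).toReal) :=
      (ENNReal.ofReal_toReal (measure_ne_top μ _)).symm
    rw [h2, h1]
    exact ofReal_integral_eq_lintegral_ofReal (hf_int k) (Filter.Eventually.of_forall (hf_nonneg k))
  have hmain : μ {ω | C (S ω) (fun j => N j ω)} ≤ ENNReal.ofReal (Real.exp β) := by
    rw [hsum]
    simp_rw [hEk]
    rw [← lintegral_tsum (f := fun k ω => ENNReal.ofReal (f k ω))
      (fun k => ((hf_meas k).ennreal_ofReal).aemeasurable)]
    calc ∫⁻ ω, ∑' k, ENNReal.ofReal (f k ω) ∂μ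
        ≤ ∫⁻ _, ENNReal.ofReal (Real.exp β) ∂μ := by
          apply lintegral_mono
          intro ω
          set s := S ω with hs
          have hs0 : 0 ≤ s := hSnonneg ω
          by_cases hex : ∃ k, C s k
          · -- tilt bound
            have hid : ∀ k : Fin K → ℕ,
                Real.exp ((∑ j, θ j * (k j : ℝ)) - r s) *
                    (∏ j, Real.exp (-(lam j) * s) * (lam j * s) ^ (k j) / (Nat.factorial (k j)))
                  = Real.exp (-(r s)) * ∏ j, (Real.exp (θ j * (k j : ℝ)) *
                      (Real.exp (-(lam j) * s) * (lam j * s) ^ (k j) / (Nat.factorial (k j)))) := by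
              intro k
              rw [sub_eq_add_neg, Real.exp_add, Real.exp_sum, Finset.prod_mul_distrib]
              ring
            calc ∑' k : Fin K → ℕ, ENNReal.ofReal (f k ω)
                ≤ ∑' k : Fin K → ℕ, ENNReal.ofReal (Real.exp ((∑ j, θ j * (k j : ℝ)) - r s) *
                    (∏ j, Real.exp (-(lam j) * s) * (lam j * s) ^ (k j) / (Nat.factorial (k j)))) := by
                  apply ENNReal.tsum_le_tsum
                  intro k
                  apply ENNReal.ofReal_le_ofReal
                  by_cases hCk : C s k
                  · have hind : Set.indicator {s' | C s' k} (fun _ => (1:ℝ)) s = 1 :=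
                      Set.indicator_of_mem (show s ∈ {s' | C s' k} from hCk) _
                    have h1 : (1:ℝ) ≤ Real.exp ((∑ j, θ j * (k j : ℝ)) - r s) :=
                      Real.one_le_exp (sub_nonneg.2 (htilt s k hs0 hCk))
                    have h2 : 0 ≤ ∏ j, Real.exp (-(lam j) * s) * (lam j * s) ^ (k j) / (Nat.factorial (k j)) :=
                      hprod_nonneg k ω
                    have h3 : f k ω = 1 * ∏ j, Real.exp (-(lam j) * s) * (lam j * s) ^ (k j) / (Nat.factorial (k j)) := by
                      simp only [hf, ← hs, hind]
                    rw [h3]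
                    exact mul_le_mul_of_nonneg_right h1 h2
                  · have hind : Set.indicator {s' | C s' k} (fun _ => (1:ℝ)) s = 0 :=
                      Set.indicator_of_notMem (show s ∉ {s' | C s' k} from hCk) _
                    have h3 : f k ω = 0 := by simp only [hf, ← hs, hind, zero_mul]
                    rw [h3]
                    have h2 : 0 ≤ ∏ j, Real.exp (-(lam j) * s) * (lam j * s) ^ (k j) / (Nat.factorial (k j)) :=
                      hprod_nonneg k ω
                    have := (Real.exp_pos ((∑ j, θ j * (k j : ℝ)) - r s)).le
                    exact mul_nonneg this h2
              _ = ENNReal.ofReal (Real.exp (-(r s))) *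
                    ∑' k : Fin K → ℕ, ∏ j, ENNReal.ofReal (Real.exp (θ j * (k j : ℝ)) *
                      (Real.exp (-(lam j) * s) * (lam j * s) ^ (k j) / (Nat.factorial (k j)))) := by
                  rw [← ENNReal.tsum_mul_left]
                  apply tsum_congr
                  intro k
                  rw [hid k]
                  rw [ENNReal.ofReal_mul (Real.exp_pos _).le]
                  congr 1
                  rw [ENNReal.ofReal_prod_of_nonneg]
                  intro j _
                  have h1 : 0 ≤ lam j * s := mul_nonneg (hlam j) hs0
                  have h2 : 0 ≤ Real.exp (-(lam j) * s) * (lam j * s) ^ (k j) / (Nat.factorial (k j)) := by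
                    rw [neg_mul]
                    positivity
                  positivity
              _ = ENNReal.ofReal (Real.exp (-(r s))) *
                    ∏ j, ENNReal.ofReal (Real.exp (lam j * s * (Real.exp (θ j) - 1))) := by
                  rw [tsum_pi_prod (fun j n => ENNReal.ofReal (Real.exp (θ j * (n:ℝ)) *
                    (Real.exp (-(lam j) * s) * (lam j * s) ^ n / (Nat.factorial n))))]
                  congr 1
                  apply Finset.prod_congr rfl
                  intro j _
                  have h1 : 0 ≤ lam j * s := mul_nonneg (hlam j) hs0
                  have := mgf_ennreal (θ j) h1
                  simp_rw [neg_mul]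
                  exact this
              _ ≤ ENNReal.ofReal (Real.exp β) := by
                  rw [← ENNReal.ofReal_prod_of_nonneg (fun j _ => (Real.exp_pos _).le),
                    ← ENNReal.ofReal_mul (Real.exp_pos _).le, ← Real.exp_sum, ← Real.exp_add]
                  apply ENNReal.ofReal_le_ofReal
                  apply Real.exp_le_exp.2
                  have := hβ s hs0 hex
                  linarith
          · -- no k satisfies C s
            push_neg at hex
            have hz : ∀ k : Fin K → ℕ, ENNReal.ofReal (f k ω) = 0 := by
              intro k
              have hind : Set.indicator {s' | C s' k} (fun _ => (1:ℝ)) s = 0 :=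
                Set.indicator_of_notMem (show s ∉ {s' | C s' k} from hex k) _
              have h3 : f k ω = 0 := by simp only [hf, ← hs, hind, zero_mul]
              rw [h3, ENNReal.ofReal_zero]
            calc ∑' k : Fin K → ℕ, ENNReal.ofReal (f k ω) = ∑' _k : Fin K → ℕ, (0:ENNReal) :=
                  tsum_congr hz
              _ = 0 := by simp
              _ ≤ ENNReal.ofReal (Real.exp β) := zero_le
      _ = ENNReal.ofReal (Real.exp β) := by
          rw [lintegral_const, measure_univ, mul_one]
  exact ENNReal.toReal_le_of_le_ofReal (Real.exp_pos _).le hmain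

lemma exp_sub_one_le_mul {t : ℝ} (h : 0 ≤ t) : Real.exp t - 1 ≤ t * Real.exp t := by
  have h1 := Real.add_one_le_exp (-t)
  have h2 := Real.exp_pos t
  have h3 : Real.exp (-t) * Real.exp t = 1 := by rw [← Real.exp_add]; simp
  nlinarith

lemma exp_neg_le_quad {t : ℝ} (h : 0 ≤ t) : Real.exp (-t) ≤ 1 - t + t ^ 2 := by
  have h1 := Real.add_one_le_exp t
  have h2 := Real.exp_pos t
  have h3 : Real.exp (-t) * Real.exp t = 1 := by rw [← Real.exp_add]; simp
  have h4 : (0:ℝ) ≤ 1 - t + t ^ 2 := by nlinarith [sq_nonneg (1 - t)]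
  have h5 := mul_le_mul_of_nonneg_left h1 h4
  nlinarith [mul_nonneg (mul_nonneg h h) h]

lemma tilt_up (lam δ : ℝ) (h0 : 0 ≤ lam) (hδ : 0 < δ) :
    ∃ t : ℝ, 0 < t ∧ lam * (Real.exp t - 1) - t * (lam + δ) ≤ -(t * δ / 2) := by
  set t := min 1 (δ / (2 * lam * Real.exp 1 + 1)) with ht
  have he1 : (1:ℝ) < Real.exp 1 := by
    have := Real.add_one_le_exp 1; linarith [Real.exp_one_gt_d9]
  have hden : 0 < 2 * lam * Real.exp 1 + 1 := by nlinarith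
  have ht0 : 0 < t := lt_min one_pos (div_pos hδ hden)
  have ht1 : t ≤ 1 := min_le_left _ _
  have ht2 : t ≤ δ / (2 * lam * Real.exp 1 + 1) := min_le_right _ _
  refine ⟨t, ht0, ?_⟩
  have hexp_le : Real.exp t ≤ Real.exp 1 := Real.exp_le_exp.2 ht1
  have h1 : Real.exp t - 1 ≤ t * Real.exp t := exp_sub_one_le_mul ht0.le
  have h2 : Real.exp t - 1 - t ≤ t * (Real.exp t - 1) := by nlinarith
  have h3 : Real.exp t - 1 - t ≤ t ^ 2 * Real.exp 1 := by nlinarith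
  -- lam * (exp t - 1) - t*(lam+δ) = lam*(exp t - 1 - t) - t*δ ≤ lam*t^2*e - t*δ
  have h4 : lam * (Real.exp t - 1) - t * (lam + δ) ≤ lam * (t ^ 2 * Real.exp 1) - t * δ := by
    nlinarith
  have h5 : lam * t * Real.exp 1 ≤ δ / 2 := by
    have hstep := mul_le_mul_of_nonneg_left ht2 (by positivity : (0:ℝ) ≤ lam * Real.exp 1)
    have h6 : lam * Real.exp 1 * (δ / (2 * lam * Real.exp 1 + 1)) ≤ δ / 2 := by
      rw [mul_div_assoc', div_le_div_iff₀ hden two_pos]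
      nlinarith
    nlinarith
  nlinarith

lemma tilt_down (lam δ : ℝ) (h0 : 0 ≤ lam) (hδ : 0 < δ) :
    ∃ t : ℝ, 0 < t ∧ lam * (Real.exp (-t) - 1) + t * (lam - δ) ≤ -(t * δ / 2) := by
  set t := δ / (2 * lam + 1) with ht
  have hden : 0 < 2 * lam + 1 := by linarith
  have ht0 : 0 < t := div_pos hδ hden
  refine ⟨t, ht0, ?_⟩
  have h1 : Real.exp (-t) ≤ 1 - t + t ^ 2 := exp_neg_le_quad ht0.le
  have h2 : lam * t ≤ δ / 2 := by
    rw [ht, mul_div_assoc', div_le_div_iff₀ hden two_pos]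
    nlinarith
  nlinarith

lemma subexp {Ω : Type*} [MeasurableSpace Ω] (μ : Measure Ω) [IsProbabilityMeasure μ]
    (S : Ω → ℝ) (α : ℝ) (hα : 0 < α)
    (hpos : ∀ x : ℝ, 0 < (μ {ω | x < S ω}).toReal)
    (hrv : Tendsto (fun x => (μ {ω | 2 * x < S ω}).toReal / (μ {ω | x < S ω}).toReal)
      atTop (nhds ((2:ℝ) ^ (-α))))
    (c : ℝ) (hc : 0 < c) :
    Tendsto (fun x => Real.exp (-(c * x)) / (μ {ω | x < S ω}).toReal) atTop (nhds 0) := by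
  set p : ℝ → ℝ := fun x => (μ {ω | x < S ω}).toReal with hp
  have hanti : Antitone p := by
    intro x y hxy
    apply ENNReal.toReal_mono (measure_ne_top μ _)
    apply measure_mono
    intro ω hω
    exact lt_of_le_of_lt hxy hω
  set q : ℝ := (2:ℝ) ^ (-α) / 2 with hqdef
  have h2pow : (0:ℝ) < (2:ℝ) ^ (-α) := Real.rpow_pos_of_pos two_pos _
  have hq0 : 0 < q := by positivity
  have hqlt : q < (2:ℝ) ^ (-α) := by rw [hqdef]; linarith
  have hq1 : q < 1 := by
    have : (2:ℝ) ^ (-α) < 1 := Real.rpow_lt_one_of_one_lt_of_neg one_lt_two (by linarith)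
    rw [hqdef]; linarith
  have hev : ∀ᶠ x in atTop, q < p (2 * x) / p x := hrv.eventually (eventually_gt_nhds hqlt)
  obtain ⟨x₁, h₁⟩ := eventually_atTop.1 hev
  have hstep : ∀ x, x₁ ≤ x → q * p x ≤ p (2 * x) := by
    intro x hx
    exact ((lt_div_iff₀ (hpos x)).1 (h₁ x hx)).le
  set x₀ : ℝ := max x₁ (max 1 (Real.log (2 / q) / c)) with hx0def
  have hx01 : (1:ℝ) ≤ x₀ := le_trans (le_max_left _ _) (le_max_right _ _)
  have hx00 : (0:ℝ) < x₀ := lt_of_lt_of_le one_pos hx01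
  have hx1le : x₁ ≤ x₀ := le_max_left _ _
  have hxc : Real.log (2 / q) / c ≤ x₀ := le_trans (le_max_right _ _) (le_max_right _ _)
  have hr : Real.exp (-(c * x₀)) ≤ q / 2 := by
    have h1 : Real.log (2 / q) ≤ c * x₀ := by
      rw [div_le_iff₀ hc] at hxc; linarith [hxc]
    calc Real.exp (-(c * x₀)) ≤ Real.exp (-(Real.log (2 / q))) :=
          Real.exp_le_exp.2 (by linarith)
      _ = ((2 / q))⁻¹ := by rw [Real.exp_neg, Real.exp_log (by positivity : (0:ℝ) < 2 / q)]
      _ = q / 2 := inv_div 2 q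
  have hr0 : 0 ≤ Real.exp (-(c * x₀)) := (Real.exp_pos _).le
  have hr1 : Real.exp (-(c * x₀)) ≤ 1 := by linarith [hq1]
  have claim1 : ∀ n : ℕ, q ^ n * p x₀ ≤ p (2 ^ n * x₀) := by
    intro n
    induction n with
    | zero => simp
    | succ n ih =>
      have h2n : (1:ℝ) ≤ 2 ^ n := one_le_pow₀ one_le_two
      have hge : x₁ ≤ 2 ^ n * x₀ := le_trans hx1le (le_mul_of_one_le_left hx00.le h2n)
      calc q ^ (n+1) * p x₀ = q * (q ^ n * p x₀) := by ring
        _ ≤ q * p (2 ^ n * x₀) := by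
            exact mul_le_mul_of_nonneg_left ih hq0.le
        _ ≤ p (2 * (2 ^ n * x₀)) := hstep _ hge
        _ = p (2 ^ (n+1) * x₀) := by ring_nf
  have claim2 : ∀ x : ℝ, x₀ ≤ x → Real.exp (-(c * x)) / p x ≤ x₀ / (p x₀ * x) := by
    intro x hx
    have hx0 : (0:ℝ) < x := lt_of_lt_of_le hx00 hx
    set y : ℝ := x / x₀ with hydef
    have hy1 : (1:ℝ) ≤ y := (one_le_div hx00).2 hx
    have hy0 : (0:ℝ) < y := lt_of_lt_of_le one_pos hy1
    set n : ℕ := ⌊Real.logb 2 y⌋₊ with hndef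
    have hlogb0 : 0 ≤ Real.logb 2 y := Real.logb_nonneg one_lt_two hy1
    have hn1 : (n:ℝ) ≤ Real.logb 2 y := Nat.floor_le hlogb0
    have hn2 : Real.logb 2 y < (n:ℝ) + 1 := Nat.lt_floor_add_one _
    have hrpow : (2:ℝ) ^ (Real.logb 2 y) = y := Real.rpow_logb two_pos (by norm_num) hy0
    have h2n : (2:ℝ) ^ n ≤ y := by
      rw [← hrpow, ← Real.rpow_natCast 2 n]
      exact Real.rpow_le_rpow_left_iff one_lt_two |>.2 hn1
    have hy2n : y ≤ (2:ℝ) ^ (n + 1) := by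
      rw [← hrpow, ← Real.rpow_natCast 2 (n+1)]
      refine Real.rpow_le_rpow_left_iff one_lt_two |>.2 ?_
      push_cast; linarith
    have hx_ge : (2:ℝ) ^ n * x₀ ≤ x := by
      have := mul_le_mul_of_nonneg_right h2n hx00.le
      rwa [hydef, div_mul_cancel₀ x (ne_of_gt hx00)] at this
    have hx_le : x ≤ (2:ℝ) ^ (n+1) * x₀ := by
      have := mul_le_mul_of_nonneg_right hy2n hx00.le
      rwa [hydef, div_mul_cancel₀ x (ne_of_gt hx00)] at this
    have hpx : q ^ (n+1) * p x₀ ≤ p x :=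
      le_trans (claim1 (n+1)) (hanti hx_le)
    have hexp1 : Real.exp (-(c * x)) ≤ Real.exp (-(c * (2 ^ n * x₀))) := by
      apply Real.exp_le_exp.2
      have := mul_le_mul_of_nonneg_left hx_ge hc.le
      linarith
    have hexp2 : Real.exp (-(c * (2 ^ n * x₀))) = (Real.exp (-(c * x₀))) ^ (2 ^ n : ℕ) := by
      rw [← Real.exp_nat_mul]
      congr 1
      push_cast
      ring
    have hpow1 : (Real.exp (-(c * x₀))) ^ (2 ^ n : ℕ) ≤ (Real.exp (-(c * x₀))) ^ (n + 1) :=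
      pow_le_pow_of_le_one hr0 hr1 (Nat.lt_two_pow_self (n := n))
    have hpow2 : (Real.exp (-(c * x₀))) ^ (n + 1) ≤ (q / 2) ^ (n + 1) :=
      pow_le_pow_left₀ hr0 hr (n + 1)
    have hchain : Real.exp (-(c * x)) ≤ (q / 2) ^ (n + 1) := by
      rw [hexp2] at hexp1
      exact le_trans hexp1 (le_trans hpow1 hpow2)
    have hq2 : (q / 2) ^ (n+1) = q ^ (n+1) * (1/2 : ℝ) ^ (n+1) := by
      rw [show q / 2 = q * (1/2) by ring, mul_pow]
    have hhalf : ((1:ℝ)/2) ^ (n+1) ≤ y⁻¹ := by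
      have h1 : ((1:ℝ)/2) ^ (n+1) = (2:ℝ) ^ (-(((n:ℝ)+1))) := by
        rw [one_div, inv_pow, ← Real.rpow_natCast 2 (n+1), ← Real.rpow_neg two_pos.le]
        push_cast
        ring_nf
      rw [h1, ← hrpow, ← Real.rpow_neg two_pos.le]
      exact Real.rpow_le_rpow_left_iff one_lt_two |>.2 (by linarith)
    calc Real.exp (-(c * x)) / p x ≤ (q / 2) ^ (n+1) / (q ^ (n+1) * p x₀) := by
          exact div_le_div₀ (by positivity) hchain (mul_pos (pow_pos hq0 _) (hpos x₀)) hpx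
      _ = ((1:ℝ)/2) ^ (n+1) / p x₀ := by
          rw [hq2]
          exact mul_div_mul_left _ _ (ne_of_gt (pow_pos hq0 (n+1)))
      _ ≤ y⁻¹ / p x₀ := by
          have hpx0 := hpos x₀
          gcongr
      _ = x₀ / (p x₀ * x) := by
          rw [hydef, inv_div, div_div, mul_comm x (p x₀)]
  -- final squeeze
  apply tendsto_of_tendsto_of_tendsto_of_le_of_le' tendsto_const_nhds
    (g := fun _ => (0:ℝ)) (h := fun x => x₀ / (p x₀ * x))
  · have h : Tendsto (fun x : ℝ => p x₀ * x) atTop atTop :=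
      Tendsto.const_mul_atTop (hpos x₀) tendsto_id
    exact Tendsto.div_atTop tendsto_const_nhds h
  · filter_upwards with x
    positivity
  · filter_upwards [eventually_ge_atTop x₀] with x hx
    exact claim2 x hx

section Apps
variable {Ω : Type*} [MeasurableSpace Ω] (μ : Measure Ω) [IsProbabilityMeasure μ]
    (S : Ω → ℝ) (hSmeas : Measurable S) (hSnonneg : ∀ ω, 0 ≤ S ω)
    {K : ℕ} (lam : Fin K → ℝ) (hlam : ∀ j, 0 ≤ lam j)
    (N : Fin K → Ω → ℕ) (hNmeas : ∀ j, Measurable (N j))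
    (hN : CondPoissonVec μ S lam N)

/-- subadditivity helper -/
lemma meas_split {X A B : Set Ω} (h : X ⊆ A ∪ B) :
    (μ X).toReal ≤ (μ A).toReal + (μ B).toReal := by
  have h1 : μ X ≤ μ A + μ B := le_trans (measure_mono h) (measure_union_le A B)
  have h2 := ENNReal.toReal_mono
    (ENNReal.add_ne_top.2 ⟨measure_ne_top μ A, measure_ne_top μ B⟩) h1
  rwa [ENNReal.toReal_add (measure_ne_top μ A) (measure_ne_top μ B)] at h2

lemma meas_split_many {X A : Set Ω} {B C : Fin K → Set Ω}
    (h : X ⊆ A ∪ ⋃ j, (B j ∪ C j)) :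
    (μ X).toReal ≤ (μ A).toReal + ∑ j, ((μ (B j)).toReal + (μ (C j)).toReal) := by
  have h1 : μ X ≤ μ A + ∑ j, (μ (B j) + μ (C j)) := by
    refine le_trans (measure_mono h) (le_trans (measure_union_le _ _) ?_)
    apply add_le_add le_rfl
    refine le_trans (measure_iUnion_le _) ?_
    rw [tsum_fintype]
    exact Finset.sum_le_sum fun j _ => measure_union_le _ _
  have hfin : (μ A + ∑ j, (μ (B j) + μ (C j))) ≠ ⊤ := by
    apply ENNReal.add_ne_top.2
    constructor
    · exact measure_ne_top μ A
    · refine (ENNReal.sum_lt_top.2 fun j _ => ?_).ne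
      exact (ENNReal.add_lt_top.2 ⟨measure_lt_top μ _, measure_lt_top μ _⟩)
  have h2 := ENNReal.toReal_mono hfin h1
  rw [ENNReal.toReal_add (measure_ne_top μ A)] at h2
  · rw [ENNReal.toReal_sum] at h2
    · convert h2 using 2
      apply Finset.sum_congr rfl
      intro j _
      rw [ENNReal.toReal_add (measure_ne_top μ _) (measure_ne_top μ _)]
    · intro j _
      exact (ENNReal.add_lt_top.2 ⟨measure_lt_top μ _, measure_lt_top μ _⟩).ne
  · refine (ENNReal.sum_lt_top.2 fun j _ => ?_).ne
    exact (ENNReal.add_lt_top.2 ⟨measure_lt_top μ _, measure_lt_top μ _⟩)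

include hSmeas hSnonneg hlam hNmeas hN in
/-- lower-deviation bound for the total sum -/
lemma app_EL (δ : ℝ) (hδ : 0 < δ) :
    ∃ c : ℝ, 0 < c ∧ ∀ y : ℝ, 0 ≤ y →
      (μ {ω | y < S ω ∧ (∑ j, (N j ω : ℝ)) < ((∑ j, lam j) - δ) * S ω}).toReal
        ≤ Real.exp (-(c * y)) := by
  have hlb : 0 ≤ ∑ j, lam j := Finset.sum_nonneg fun j _ => hlam j
  obtain ⟨t, ht, htd⟩ := tilt_down (∑ j, lam j) δ hlb hδ
  refine ⟨t * δ / 2, by positivity, ?_⟩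
  intro y hy
  have := core μ S hSmeas hSnonneg lam hlam N hNmeas hN
    (fun s k => y < s ∧ (∑ j, (k j : ℝ)) < ((∑ j, lam j) - δ) * s)
    (fun k => by
      have : {s | y < s ∧ (∑ j, (k j : ℝ)) < ((∑ j, lam j) - δ) * s}
          = Set.Ioi y ∩ (fun s => ((∑ j, lam j) - δ) * s) ⁻¹' (Set.Ioi (∑ j, (k j : ℝ))) := by
        ext s; simp [Set.mem_Ioi]
      rw [this]
      exact measurableSet_Ioi.inter ((measurable_const_mul _) measurableSet_Ioi))
    (fun _ => -t) (fun s => -(t * (((∑ j, lam j) - δ) * s))) (-(t * δ / 2 * y))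
    ?_ ?_
  · calc (μ {ω | y < S ω ∧ (∑ j, (N j ω : ℝ)) < ((∑ j, lam j) - δ) * S ω}).toReal
        ≤ Real.exp (-(t * δ / 2 * y)) := this
      _ = Real.exp (-(t * δ / 2 * y)) := rfl
  · intro s k hs ⟨h1, h2⟩
    have h3 : t * (∑ j, (k j : ℝ)) ≤ t * (((∑ j, lam j) - δ) * s) :=
      mul_le_mul_of_nonneg_left h2.le ht.le
    calc -(t * (((∑ j, lam j) - δ) * s)) ≤ -(t * (∑ j, (k j : ℝ))) := by linarith
      _ = ∑ j, -t * (k j : ℝ) := by rw [← Finset.mul_sum]; ring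
  · intro s hs ⟨k, hk1, hk2⟩
    have hsum : (∑ j, lam j * s * (Real.exp (-t) - 1))
        = (∑ j, lam j) * (s * (Real.exp (-t) - 1)) := by
      rw [Finset.sum_mul]
      apply Finset.sum_congr rfl
      intro j _; ring
    rw [hsum]
    have hA : (∑ j, lam j) * (Real.exp (-t) - 1) + t * ((∑ j, lam j) - δ) ≤ -(t * δ / 2) := htd
    have hsy : y ≤ s := le_of_lt hk1
    -- goal : (∑lam)*(s*(e^{-t}-1)) + t*((∑lam - δ)*s) ≤ -(t*δ/2*y)
    have hkey : ((∑ j, lam j) * (Real.exp (-t) - 1) + t * ((∑ j, lam j) - δ)) * s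
        ≤ (-(t * δ / 2)) * s := mul_le_mul_of_nonneg_right hA hs
    have hkey2 : (-(t * δ / 2)) * s ≤ (-(t * δ / 2)) * y := by
      apply mul_le_mul_of_nonpos_left hsy
      have : 0 < t * δ / 2 := by positivity
      linarith
    nlinarith

include hSmeas hSnonneg hlam hNmeas hN in
/-- upper error bound: small `S`, huge Poisson sum -/
lemma app_EU (η : ℝ) (hη : 0 < η) (hηL : η * (1 + ∑ j, lam j) < 1) :
    ∃ c : ℝ, 0 < c ∧ ∀ x : ℝ, 0 ≤ x →
      (μ {ω | S ω ≤ η * x ∧ x < S ω + ∑ j, (N j ω : ℝ)}).toReal ≤ Real.exp (-(c * x)) := by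
  have hlb : 0 ≤ ∑ j, lam j := Finset.sum_nonneg fun j _ => hlam j
  set lb := ∑ j, lam j with hlbdef
  set δη : ℝ := (1 - η * (1 + lb)) / η with hδηdef
  have hδη : 0 < δη := div_pos (by linarith) hη
  have hδηeq : lb + δη = (1 - η) / η := by
    rw [hδηdef]
    field_simp
    ring
  obtain ⟨t, ht, htd⟩ := tilt_up lb δη hlb hδη
  refine ⟨η * t * δη / 2, by positivity, ?_⟩
  intro x hx
  refine core μ S hSmeas hSnonneg lam hlam N hNmeas hN
    (fun s k => s ≤ η * x ∧ x < s + ∑ j, (k j : ℝ))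
    (fun k => by
      have : {s | s ≤ η * x ∧ x < s + ∑ j, (k j : ℝ)}
          = Set.Iic (η * x) ∩ Set.Ioi (x - ∑ j, (k j : ℝ)) := by
        ext s; simp [Set.mem_Ioi, Set.mem_Iic, sub_lt_iff_lt_add, and_comm]
      rw [this]
      exact measurableSet_Iic.inter measurableSet_Ioi)
    (fun _ => t) (fun s => t * (x - s)) (-(η * t * δη / 2 * x)) ?_ ?_
  · intro s k hs ⟨h1, h2⟩
    have h3 : t * (x - s) ≤ t * (∑ j, (k j : ℝ)) :=
      mul_le_mul_of_nonneg_left (by linarith) ht.le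
    calc t * (x - s) ≤ t * (∑ j, (k j : ℝ)) := h3
      _ = ∑ j, t * (k j : ℝ) := Finset.mul_sum _ _ _
  · intro s hs ⟨k, hk1, hk2⟩
    have hsum : (∑ j, lam j * s * (Real.exp t - 1)) = lb * (Real.exp t - 1) * s := by
      rw [hlbdef, Finset.sum_mul, Finset.sum_mul]
      apply Finset.sum_congr rfl
      intro j _; ring
    rw [hsum]
    have hA : 0 ≤ lb * (Real.exp t - 1) + t := by
      have : (1:ℝ) ≤ Real.exp t := Real.one_le_exp ht.le
      nlinarith
    have h1 : (lb * (Real.exp t - 1) + t) * s ≤ (lb * (Real.exp t - 1) + t) * (η * x) :=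
      mul_le_mul_of_nonneg_left hk1 hA
    have h2 : lb * (Real.exp t - 1) - t * (lb + δη) ≤ -(t * δη / 2) := htd
    rw [hδηeq] at h2
    -- need : lb*(e^t-1)*s - t*(x - s) ≤ -(η*t*δη/2*x)
    have h3 : (lb * (Real.exp t - 1) + t) * η - t ≤ -(η * (t * δη / 2)) := by
      have h4 : (lb * (Real.exp t - 1) - t * ((1 - η) / η)) * η ≤ (-(t * δη / 2)) * η :=
        mul_le_mul_of_nonneg_right h2 hη.le
      have h5 : t * ((1 - η) / η) * η = t * (1 - η) := by
        field_simp
      nlinarith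
    nlinarith [mul_le_mul_of_nonneg_right h3 hx]

include hSmeas hSnonneg hlam hNmeas hN in
/-- upward deviation of a single coordinate -/
lemma app_Dup (j₀ : Fin K) (δ : ℝ) (hδ : 0 < δ) :
    ∃ c : ℝ, 0 < c ∧ ∀ z : ℝ, 0 ≤ z →
      (μ {ω | z < S ω ∧ (lam j₀ + δ) * S ω < (N j₀ ω : ℝ)}).toReal ≤ Real.exp (-(c * z)) := by
  obtain ⟨t, ht, htd⟩ := tilt_up (lam j₀) δ (hlam j₀) hδ
  refine ⟨t * δ / 2, by positivity, ?_⟩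
  intro z hz
  refine core μ S hSmeas hSnonneg lam hlam N hNmeas hN
    (fun s k => z < s ∧ (lam j₀ + δ) * s < (k j₀ : ℝ))
    (fun k => by
      have : {s | z < s ∧ (lam j₀ + δ) * s < (k j₀ : ℝ)}
          = Set.Ioi z ∩ (fun s => (lam j₀ + δ) * s) ⁻¹' (Set.Iio (k j₀ : ℝ)) := by
        ext s; simp [Set.mem_Ioi, Set.mem_Iio]
      rw [this]
      exact measurableSet_Ioi.inter ((measurable_const_mul _) measurableSet_Iio))
    (fun i => if i = j₀ then t else 0) (fun s => t * ((lam j₀ + δ) * s)) (-(t * δ / 2 * z)) ?_ ?_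
  · intro s k hs ⟨h1, h2⟩
    have hsum : ∑ i, (if i = j₀ then t else 0) * (k i : ℝ) = t * (k j₀ : ℝ) := by
      rw [Finset.sum_eq_single j₀]
      · simp
      · intro b _ hb; simp [hb]
      · intro h; exact absurd (Finset.mem_univ j₀) h
    rw [hsum]
    exact mul_le_mul_of_nonneg_left h2.le ht.le
  · intro s hs ⟨k, hk1, hk2⟩
    have hsum : (∑ i, lam i * s * (Real.exp (if i = j₀ then t else 0) - 1))
        = lam j₀ * s * (Real.exp t - 1) := by
      rw [Finset.sum_eq_single j₀]
      · simp
      · intro b _ hb; simp [hb]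
      · intro h; exact absurd (Finset.mem_univ j₀) h
    rw [hsum]
    have hkey : (lam j₀ * (Real.exp t - 1) - t * (lam j₀ + δ)) * s ≤ (-(t * δ / 2)) * s :=
      mul_le_mul_of_nonneg_right htd hs
    have hkey2 : (-(t * δ / 2)) * s ≤ (-(t * δ / 2)) * z := by
      apply mul_le_mul_of_nonpos_left hk1.le
      have : 0 < t * δ / 2 := by positivity
      linarith
    nlinarith

include hSmeas hSnonneg hlam hNmeas hN in
/-- downward deviation of a single coordinate -/
lemma app_Ddown (j₀ : Fin K) (δ : ℝ) (hδ : 0 < δ) :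
    ∃ c : ℝ, 0 < c ∧ ∀ z : ℝ, 0 ≤ z →
      (μ {ω | z < S ω ∧ (N j₀ ω : ℝ) < (lam j₀ - δ) * S ω}).toReal ≤ Real.exp (-(c * z)) := by
  obtain ⟨t, ht, htd⟩ := tilt_down (lam j₀) δ (hlam j₀) hδ
  refine ⟨t * δ / 2, by positivity, ?_⟩
  intro z hz
  refine core μ S hSmeas hSnonneg lam hlam N hNmeas hN
    (fun s k => z < s ∧ (k j₀ : ℝ) < (lam j₀ - δ) * s)
    (fun k => by
      have : {s | z < s ∧ (k j₀ : ℝ) < (lam j₀ - δ) * s}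
          = Set.Ioi z ∩ (fun s => (lam j₀ - δ) * s) ⁻¹' (Set.Ioi (k j₀ : ℝ)) := by
        ext s; simp [Set.mem_Ioi]
      rw [this]
      exact measurableSet_Ioi.inter ((measurable_const_mul _) measurableSet_Ioi))
    (fun i => if i = j₀ then -t else 0) (fun s => -(t * ((lam j₀ - δ) * s))) (-(t * δ / 2 * z)) ?_ ?_
  · intro s k hs ⟨h1, h2⟩
    have hsum : ∑ i, (if i = j₀ then -t else 0) * (k i : ℝ) = -t * (k j₀ : ℝ) := by
      rw [Finset.sum_eq_single j₀]
      · simp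
      · intro b _ hb; simp [hb]
      · intro h; exact absurd (Finset.mem_univ j₀) h
    rw [hsum]
    have h3 : t * (k j₀ : ℝ) ≤ t * ((lam j₀ - δ) * s) := mul_le_mul_of_nonneg_left h2.le ht.le
    linarith
  · intro s hs ⟨k, hk1, hk2⟩
    have hsum : (∑ i, lam i * s * (Real.exp (if i = j₀ then -t else 0) - 1))
        = lam j₀ * s * (Real.exp (-t) - 1) := by
      rw [Finset.sum_eq_single j₀]
      · simp
      · intro b _ hb; simp [hb]
      · intro h; exact absurd (Finset.mem_univ j₀) h
    rw [hsum]
    have hkey : (lam j₀ * (Real.exp (-t) - 1) + t * (lam j₀ - δ)) * s ≤ (-(t * δ / 2)) * s :=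
      mul_le_mul_of_nonneg_right htd hs
    have hkey2 : (-(t * δ / 2)) * s ≤ (-(t * δ / 2)) * z := by
      apply mul_le_mul_of_nonpos_left hk1.le
      have : 0 < t * δ / 2 := by positivity
      linarith
    nlinarith
end Apps

lemma geom {K : ℕ} (lam : Fin K → ℝ) (hlam : ∀ j, 0 ≤ lam j) (ε δ : ℝ) (hε : 0 < ε)
    (hδ0 : 0 < δ) (hδ1 : (K:ℝ) * δ ≤ 1/2)
    (hδ2 : (2*(K:ℝ) + 2*((1 + ∑ j, lam j) + (∑ j, lam j)*(K:ℝ))) * δ ≤ ε)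
    (s : ℝ) (hs : 0 < s) (n : Fin K → ℝ)
    (hbd : ∀ j, (lam j - δ) * s ≤ n j ∧ n j ≤ (lam j + δ) * s) :
    ‖((s / (s + ∑ j, n j), fun j => n j / (s + ∑ j, n j)) : ℝ × (Fin K → ℝ))
      - (1 / (1 + ∑ j, lam j), fun j => lam j / (1 + ∑ j, lam j))‖ ≤ ε := by
  have hlb : 0 ≤ ∑ j, lam j := Finset.sum_nonneg fun j _ => hlam j
  set lb := ∑ j, lam j with hlbdef
  set L : ℝ := 1 + lb with hLdef
  have hL1 : (1:ℝ) ≤ L := by rw [hLdef]; linarith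
  have hL0 : (0:ℝ) < L := by linarith
  set T : ℝ := s + ∑ j, n j with hTdef
  have habs : ∀ j, |n j - lam j * s| ≤ δ * s := by
    intro j
    rw [abs_le]
    constructor
    · have := (hbd j).1; nlinarith
    · have := (hbd j).2; nlinarith
  have hsum_abs : |(∑ j, n j) - lb * s| ≤ (K:ℝ) * δ * s := by
    have h1 : (∑ j, n j) - lb * s = ∑ j, (n j - lam j * s) := by
      rw [hlbdef, Finset.sum_sub_distrib, Finset.sum_mul]
    rw [h1]
    calc |∑ j, (n j - lam j * s)| ≤ ∑ j, |n j - lam j * s| :=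
          Finset.abs_sum_le_sum_abs _ _
      _ ≤ ∑ _j : Fin K, δ * s := Finset.sum_le_sum fun j _ => habs j
      _ = (K:ℝ) * δ * s := by
          rw [Finset.sum_const, Finset.card_univ, Fintype.card_fin]
          push_cast; ring
  have hKδ : (K:ℝ) * δ * s ≤ s / 2 := by nlinarith
  have hT_low : s / 2 ≤ T := by
    have h1 : -(↑K * δ * s) ≤ (∑ j, n j) - lb * s := neg_le_of_abs_le hsum_abs
    have : lb * s ≥ 0 := mul_nonneg hlb hs.le
    nlinarith
  have hT0 : 0 < T := lt_of_lt_of_le (by linarith) hT_low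
  have hTL : s / 2 ≤ T * L := by nlinarith
  have hTL0 : 0 < T * L := mul_pos hT0 hL0
  have hcoord1 : |s / T - 1 / L| ≤ ε := by
    rw [div_sub_div _ _ (ne_of_gt hT0) (ne_of_gt hL0), abs_div]
    rw [abs_of_pos hTL0]
    rw [div_le_iff₀ hTL0]
    have hnum : |s * L - T * 1| ≤ (K:ℝ) * δ * s := by
      have : s * L - T * 1 = -((∑ j, n j) - lb * s) := by rw [hTdef, hLdef]; ring
      rw [this, abs_neg]
      exact hsum_abs
    have hε2 : 2 * (K:ℝ) * δ ≤ ε := by nlinarith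
    calc |s * L - T * 1| ≤ (K:ℝ) * δ * s := hnum
      _ = (2 * (K:ℝ) * δ) * (s / 2) := by ring
      _ ≤ ε * (T * L) := by
          apply mul_le_mul hε2 hTL (by linarith) hε.le
  have hcoords : ∀ j, |n j / T - lam j / L| ≤ ε := by
    intro j
    rw [div_sub_div _ _ (ne_of_gt hT0) (ne_of_gt hL0), abs_div]
    rw [abs_of_pos hTL0]
    rw [div_le_iff₀ hTL0]
    have hlamj : lam j ≤ lb := Finset.single_le_sum (fun i _ => hlam i) (Finset.mem_univ j)
    have hnum : |n j * L - T * lam j| ≤ (L + lb * (K:ℝ)) * (δ * s) := by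
      have hid : n j * L - T * lam j
          = L * (n j - lam j * s) + lam j * (lb * s - (∑ j, n j)) := by
        rw [hTdef, hLdef]; ring
      rw [hid]
      calc |L * (n j - lam j * s) + lam j * (lb * s - (∑ j, n j))|
          ≤ |L * (n j - lam j * s)| + |lam j * (lb * s - (∑ j, n j))| := abs_add_le _ _
        _ = L * |n j - lam j * s| + lam j * |(∑ j, n j) - lb * s| := by
            rw [abs_mul, abs_mul, abs_of_pos hL0, abs_of_nonneg (hlam j), ← abs_neg (lb * s - (∑ j, n j))]
            ring_nf
        _ ≤ L * (δ * s) + lam j * ((K:ℝ) * δ * s) := by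
            apply add_le_add
            · exact mul_le_mul_of_nonneg_left (habs j) hL0.le
            · exact mul_le_mul_of_nonneg_left hsum_abs (hlam j)
        _ ≤ (L + lb * (K:ℝ)) * (δ * s) := by
            have hmono := mul_le_mul_of_nonneg_right hlamj
              (by positivity : (0:ℝ) ≤ (K:ℝ) * δ * s)
            nlinarith
    have hε2 : 2 * (L + lb * (K:ℝ)) * δ ≤ ε := by
      have hK0 : (0:ℝ) ≤ (K:ℝ) := Nat.cast_nonneg K
      nlinarith
    calc |n j * L - T * lam j| ≤ (L + lb * (K:ℝ)) * (δ * s) := hnum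
      _ = (2 * (L + lb * (K:ℝ)) * δ) * (s / 2) := by ring
      _ ≤ ε * (T * L) := by
          apply mul_le_mul hε2 hTL (by linarith) hε.le
  -- assemble the norm
  rw [Prod.mk_sub_mk, Prod.norm_def]
  apply max_le
  · rw [Real.norm_eq_abs]
    exact hcoord1
  · rw [pi_norm_le_iff_of_nonneg hε.le]
    intro j
    show ‖n j / T - lam j / L‖ ≤ ε
    rw [Real.norm_eq_abs]
    exact hcoords j

/-- Let `S` be a nonnegative random variable with regularly varying
tail of index `α > 0`, let `λ₁, …, λ_K ≥ 0` with `λ̄ = ∑ⱼ λⱼ > 0`, and let `N₁, …, N_K`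
be conditionally independent Poisson with means `λⱼ S` given `S`. Then:
(a) `P(S + N₁ + ⋯ + N_K > x) ∼ P((1 + λ̄) S > x)`; and
(b) given `S + N₁ + ⋯ + N_K > x`, the normalized vector
`(S, N₁, …, N_K)/(S + N₁ + ⋯ + N_K)` converges in conditional probability to
`(1, λ₁, …, λ_K)/(1 + λ̄)`. -/
theorem stmt14 {Ω : Type*} [MeasurableSpace Ω] (μ : Measure Ω)
    [IsProbabilityMeasure μ]
    (S : Ω → ℝ) (hSmeas : Measurable S) (hSnonneg : ∀ ω, 0 ≤ S ω)
    (α : ℝ) (hα : 0 < α) (hSrv : RegVaryingTailRV μ S α)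
    {K : ℕ} (lam : Fin K → ℝ) (hlam : ∀ j, 0 ≤ lam j) (hlampos : 0 < ∑ j, lam j)
    (N : Fin K → Ω → ℕ) (hNmeas : ∀ j, Measurable (N j))
    (hN : CondPoissonVec μ S lam N) :
    Tendsto (fun x => (μ {ω | x < S ω + ∑ j, (N j ω : ℝ)}).toReal
        / (μ {ω | x < (1 + ∑ j, lam j) * S ω}).toReal) atTop (nhds 1) ∧
    ∀ ε : ℝ, 0 < ε →
      Tendsto (fun x =>
          (μ {ω | x < S ω + ∑ j, (N j ω : ℝ) ∧
              ε < ‖((S ω / (S ω + ∑ j, (N j ω : ℝ)),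
                      fun j => (N j ω : ℝ) / (S ω + ∑ j, (N j ω : ℝ))) :
                    ℝ × (Fin K → ℝ))
                  - (1 / (1 + ∑ j, lam j), fun j => lam j / (1 + ∑ j, lam j))‖}).toReal
            / (μ {ω | x < S ω + ∑ j, (N j ω : ℝ)}).toReal) atTop (nhds 0) := by
  classical
  obtain ⟨hpos, hrv⟩ := hSrv
  have hlb0 : 0 ≤ ∑ j, lam j := Finset.sum_nonneg fun j _ => hlam j
  have hL0 : (0:ℝ) < 1 + ∑ j, lam j := by linarith
  have hL1 : (1:ℝ) ≤ 1 + ∑ j, lam j := by linarith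
  -- denominator rewrite
  have hDenEq : ∀ x : ℝ, (μ {ω | x < (1 + ∑ j, lam j) * S ω})
      = (μ {ω | x / (1 + ∑ j, lam j) < S ω}) := by
    intro x
    congr 1
    ext ω
    simp only [Set.mem_setOf_eq]
    rw [div_lt_iff₀ hL0, mul_comm]
  have hDenpos : ∀ x : ℝ, 0 < (μ {ω | x < (1 + ∑ j, lam j) * S ω}).toReal := by
    intro x; rw [hDenEq]; exact hpos _
  -- relative subexponential decay
  have hsubDen : ∀ c : ℝ, 0 < c →
      Tendsto (fun x => Real.exp (-(c * x)) / (μ {ω | x < (1 + ∑ j, lam j) * S ω}).toReal)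
        atTop (nhds 0) := by
    intro c hc
    have h1 := subexp μ S α hα hpos (hrv 2 two_pos) (c * (1 + ∑ j, lam j))
      (by positivity)
    have h2 : Tendsto (fun x : ℝ => x / (1 + ∑ j, lam j)) atTop atTop :=
      tendsto_id.atTop_div_const hL0
    have h3 := h1.comp h2
    refine h3.congr ?_
    intro x
    show Real.exp (-(c * (1 + ∑ j, lam j) * (x / (1 + ∑ j, lam j))))
        / (μ {ω | x / (1 + ∑ j, lam j) < S ω}).toReal = _
    have hL' : (1 + ∑ j, lam j) ≠ 0 := ne_of_gt hL0
    have harg : c * (1 + ∑ j, lam j) * (x / (1 + ∑ j, lam j)) = c * x := by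
      field_simp
    rw [hDenEq x, harg]
  -- regular-variation ratio limits
  have hratio : ∀ u : ℝ, 0 < u →
      Tendsto (fun x => (μ {ω | x / u < S ω}).toReal
          / (μ {ω | x < (1 + ∑ j, lam j) * S ω}).toReal)
        atTop (nhds (((1 + ∑ j, lam j) / u) ^ (-α))) := by
    intro u hu
    have h1 := hrv ((1 + ∑ j, lam j) / u) (by positivity)
    have h2 : Tendsto (fun x : ℝ => x / (1 + ∑ j, lam j)) atTop atTop :=
      tendsto_id.atTop_div_const hL0
    have h3 := h1.comp h2
    refine h3.congr ?_
    intro x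
    show (μ {ω | (1 + ∑ j, lam j) / u * (x / (1 + ∑ j, lam j)) < S ω}).toReal
        / (μ {ω | x / (1 + ∑ j, lam j) < S ω}).toReal = _
    have hu' : u ≠ 0 := ne_of_gt hu
    have hL' : (1 + ∑ j, lam j) ≠ 0 := ne_of_gt hL0
    have harg : (1 + ∑ j, lam j) / u * (x / (1 + ∑ j, lam j)) = x / u := by
      field_simp
    rw [hDenEq x, harg]
  -- part (a) upper bound
  have hupper : ∀ δ : ℝ, 0 < δ → ∃ c : ℝ, 0 < c ∧ ∀ x : ℝ, 0 ≤ x →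
      (μ {ω | x < S ω + ∑ j, (N j ω : ℝ)}).toReal
        ≤ (μ {ω | x / ((1 + ∑ j, lam j) + δ) < S ω}).toReal + Real.exp (-(c * x)) := by
    intro δ hδ
    have hLδ : (0:ℝ) < (1 + ∑ j, lam j) + δ := by linarith
    obtain ⟨c, hc, hbound⟩ := app_EU μ S hSmeas hSnonneg lam hlam N hNmeas hN
      (1 / ((1 + ∑ j, lam j) + δ)) (by positivity)
      (by rw [div_mul_eq_mul_div, div_lt_one hLδ]; linarith)
    refine ⟨c, hc, fun x hx => ?_⟩
    have hincl : {ω | x < S ω + ∑ j, (N j ω : ℝ)}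
        ⊆ {ω | x / ((1 + ∑ j, lam j) + δ) < S ω}
          ∪ {ω | S ω ≤ 1 / ((1 + ∑ j, lam j) + δ) * x ∧ x < S ω + ∑ j, (N j ω : ℝ)} := by
      intro ω hω
      by_cases hcase : S ω ≤ 1 / ((1 + ∑ j, lam j) + δ) * x
      · right; exact ⟨hcase, hω⟩
      · left
        push_neg at hcase
        show x / ((1 + ∑ j, lam j) + δ) < S ω
        rwa [← one_div_mul_eq_div]
    exact le_trans (meas_split μ hincl) (add_le_add_right (hbound x hx) _)
  -- part (a) lower bound
  have hlower : ∀ δ : ℝ, 0 < δ → δ < 1 + ∑ j, lam j → ∃ c : ℝ, 0 < c ∧ ∀ x : ℝ, 0 ≤ x →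
      (μ {ω | x / ((1 + ∑ j, lam j) - δ) < S ω}).toReal
        ≤ (μ {ω | x < S ω + ∑ j, (N j ω : ℝ)}).toReal + Real.exp (-(c * x)) := by
    intro δ hδ hδL
    have hLδ : (0:ℝ) < (1 + ∑ j, lam j) - δ := by linarith
    obtain ⟨c, hc, hbound⟩ := app_EL μ S hSmeas hSnonneg lam hlam N hNmeas hN δ hδ
    refine ⟨c / ((1 + ∑ j, lam j) - δ), div_pos hc hLδ, fun x hx => ?_⟩
    have hy : 0 ≤ x / ((1 + ∑ j, lam j) - δ) := by positivity
    have hincl : {ω | x / ((1 + ∑ j, lam j) - δ) < S ω}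
        ⊆ {ω | x < S ω + ∑ j, (N j ω : ℝ)}
          ∪ {ω | x / ((1 + ∑ j, lam j) - δ) < S ω
              ∧ (∑ j, (N j ω : ℝ)) < ((∑ j, lam j) - δ) * S ω} := by
      intro ω hω
      by_cases hcase : (∑ j, (N j ω : ℝ)) < ((∑ j, lam j) - δ) * S ω
      · right; exact ⟨hω, hcase⟩
      · left
        push_neg at hcase
        show x < S ω + ∑ j, (N j ω : ℝ)
        have h1 : x / ((1 + ∑ j, lam j) - δ) < S ω := hω
        rw [div_lt_iff₀ hLδ] at h1
        nlinarith
    refine le_trans (meas_split μ hincl) (add_le_add_right ?_ _)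
    calc (μ {ω | x / ((1 + ∑ j, lam j) - δ) < S ω
            ∧ (∑ j, (N j ω : ℝ)) < ((∑ j, lam j) - δ) * S ω}).toReal
        ≤ Real.exp (-(c * (x / ((1 + ∑ j, lam j) - δ)))) := hbound _ hy
      _ = Real.exp (-(c / ((1 + ∑ j, lam j) - δ) * x)) := by
          congr 1
          ring
  -- part (a)
  have parta : Tendsto (fun x => (μ {ω | x < S ω + ∑ j, (N j ω : ℝ)}).toReal
      / (μ {ω | x < (1 + ∑ j, lam j) * S ω}).toReal) atTop (nhds 1) := by
    rw [Metric.tendsto_nhds]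
    intro ε hε
    -- choose δ
    have hc1 : Tendsto (fun δ : ℝ => ((1 + ∑ j, lam j) / ((1 + ∑ j, lam j) + δ)) ^ (-α))
        (nhds 0) (nhds 1) := by
      have hb1 : Tendsto (fun δ : ℝ => (1 + ∑ j, lam j) / ((1 + ∑ j, lam j) + δ))
          (nhds 0) (nhds 1) := by
        have hd : Tendsto (fun δ : ℝ => (1 + ∑ j, lam j) + δ) (nhds 0)
            (nhds (1 + ∑ j, lam j)) := by
          have := (tendsto_const_nhds (x := (1 + ∑ j, lam j)) (f := nhds (0:ℝ))).add tendsto_id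
          simpa using this
        have := (tendsto_const_nhds (x := (1 + ∑ j, lam j)) (f := nhds (0:ℝ))).div hd hL0.ne'
        simpa [div_self hL0.ne', Pi.div_def] using this
      have hco : ContinuousAt (fun v : ℝ => v ^ (-α)) 1 :=
        Real.continuousAt_rpow_const 1 (-α) (Or.inl one_ne_zero)
      have := hco.tendsto.comp hb1
      simpa [Real.one_rpow, Function.comp_def] using this
    have hc2 : Tendsto (fun δ : ℝ => ((1 + ∑ j, lam j) / ((1 + ∑ j, lam j) - δ)) ^ (-α))
        (nhds 0) (nhds 1) := by
      have hb1 : Tendsto (fun δ : ℝ => (1 + ∑ j, lam j) / ((1 + ∑ j, lam j) - δ))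
          (nhds 0) (nhds 1) := by
        have hd : Tendsto (fun δ : ℝ => (1 + ∑ j, lam j) - δ) (nhds 0)
            (nhds (1 + ∑ j, lam j)) := by
          have := (tendsto_const_nhds (x := (1 + ∑ j, lam j)) (f := nhds (0:ℝ))).sub tendsto_id
          simpa using this
        have := (tendsto_const_nhds (x := (1 + ∑ j, lam j)) (f := nhds (0:ℝ))).div hd hL0.ne'
        simpa [div_self hL0.ne', Pi.div_def] using this
      have hco : ContinuousAt (fun v : ℝ => v ^ (-α)) 1 :=
        Real.continuousAt_rpow_const 1 (-α) (Or.inl one_ne_zero)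
      have := hco.tendsto.comp hb1
      simpa [Real.one_rpow, Function.comp_def] using this
    have hev1 : ∀ᶠ δ in nhds (0:ℝ),
        |((1 + ∑ j, lam j) / ((1 + ∑ j, lam j) + δ)) ^ (-α) - 1| < ε / 2 := by
      have := Metric.tendsto_nhds.1 hc1 (ε/2) (half_pos hε)
      simpa [Real.dist_eq] using this
    have hev2 : ∀ᶠ δ in nhds (0:ℝ),
        |((1 + ∑ j, lam j) / ((1 + ∑ j, lam j) - δ)) ^ (-α) - 1| < ε / 2 := by
      have := Metric.tendsto_nhds.1 hc2 (ε/2) (half_pos hε)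
      simpa [Real.dist_eq] using this
    have hev3 : ∀ᶠ δ in nhds (0:ℝ), |δ| < 1 + ∑ j, lam j := by
      have : ∀ᶠ δ in nhds (0:ℝ), dist δ 0 < 1 + ∑ j, lam j :=
        Metric.ball_mem_nhds 0 hL0
      simpa [Real.dist_eq] using this
    obtain ⟨δ, ⟨⟨h1δ, h2δ⟩, h3δ⟩, h4δ⟩ :=
      (((hev1.and hev2).and hev3).filter_mono nhdsWithin_le_nhds |>.and
        eventually_mem_nhdsWithin).exists (f := nhdsWithin (0:ℝ) (Set.Ioi 0))
    have hδ0 : (0:ℝ) < δ := h4δ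
    have hδL : δ < 1 + ∑ j, lam j := lt_of_abs_lt h3δ
    obtain ⟨c₂, hc₂, hup⟩ := hupper δ hδ0
    obtain ⟨c₁, hc₁, hlo⟩ := hlower δ hδ0 hδL
    have hAup := hratio ((1 + ∑ j, lam j) + δ) (by linarith)
    have hAlo := hratio ((1 + ∑ j, lam j) - δ) (by linarith)
    have hBup := hsubDen c₂ hc₂
    have hBlo := hsubDen c₁ hc₁
    have hU := hAup.add hBup
    have hV := hAlo.sub hBlo
    rw [add_zero] at hU
    rw [sub_zero] at hV
    have hUlt : ((1 + ∑ j, lam j) / ((1 + ∑ j, lam j) + δ)) ^ (-α) < 1 + ε := by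
      have := abs_lt.1 h1δ
      linarith [this.2]
    have hVgt : 1 - ε < ((1 + ∑ j, lam j) / ((1 + ∑ j, lam j) - δ)) ^ (-α) := by
      have := abs_lt.1 h2δ
      linarith [this.1]
    filter_upwards [hU.eventually (eventually_lt_nhds hUlt),
      hV.eventually (eventually_gt_nhds hVgt), eventually_ge_atTop (0:ℝ)] with x hx1 hx2 hx0
    rw [Real.dist_eq, abs_lt]
    constructor
    · -- lower
      have h1 := hlo x hx0
      have h2 : (μ {ω | x / ((1 + ∑ j, lam j) - δ) < S ω}).toReal
          / (μ {ω | x < (1 + ∑ j, lam j) * S ω}).toReal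
          ≤ (μ {ω | x < S ω + ∑ j, (N j ω : ℝ)}).toReal
              / (μ {ω | x < (1 + ∑ j, lam j) * S ω}).toReal
            + Real.exp (-(c₁ * x)) / (μ {ω | x < (1 + ∑ j, lam j) * S ω}).toReal := by
        rw [← add_div]
        exact (div_le_div_iff_of_pos_right (hDenpos x)).2 h1
      have h3 : 1 - ε < (μ {ω | x / ((1 + ∑ j, lam j) - δ) < S ω}).toReal
          / (μ {ω | x < (1 + ∑ j, lam j) * S ω}).toReal
          - Real.exp (-(c₁ * x)) / (μ {ω | x < (1 + ∑ j, lam j) * S ω}).toReal := hx2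
      linarith
    · -- upper
      have h1 := hup x hx0
      have h2 : (μ {ω | x < S ω + ∑ j, (N j ω : ℝ)}).toReal
          / (μ {ω | x < (1 + ∑ j, lam j) * S ω}).toReal
          ≤ (μ {ω | x / ((1 + ∑ j, lam j) + δ) < S ω}).toReal
              / (μ {ω | x < (1 + ∑ j, lam j) * S ω}).toReal
            + Real.exp (-(c₂ * x)) / (μ {ω | x < (1 + ∑ j, lam j) * S ω}).toReal := by
        rw [← add_div]
        exact (div_le_div_iff_of_pos_right (hDenpos x)).2 h1
      linarith
  refine ⟨parta, ?_⟩
  -- part (b)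
  intro ε hε
  set Mc : ℝ := 2*(K:ℝ) + 2*((1 + ∑ j, lam j) + (∑ j, lam j)*(K:ℝ)) with hMcdef
  have hMc0 : 0 ≤ Mc := by
    have : (0:ℝ) ≤ (K:ℝ) := Nat.cast_nonneg K
    rw [hMcdef]
    nlinarith
  set δ : ℝ := min (1/(2*(K:ℝ)+1)) (ε/(Mc+1)) with hδdef
  have hδ0 : 0 < δ := lt_min (by positivity) (by positivity)
  have hδ1 : (K:ℝ) * δ ≤ 1/2 := by
    have h1 : δ ≤ 1/(2*(K:ℝ)+1) := min_le_left _ _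
    have hK0 : (0:ℝ) ≤ (K:ℝ) := Nat.cast_nonneg K
    have h2 : (K:ℝ) * δ ≤ (K:ℝ) * (1/(2*(K:ℝ)+1)) := mul_le_mul_of_nonneg_left h1 hK0
    have h3 : (K:ℝ) * (1/(2*(K:ℝ)+1)) ≤ 1/2 := by
      rw [mul_one_div, div_le_div_iff₀ (by positivity) two_pos]
      linarith
    linarith
  have hδ2 : Mc * δ ≤ ε := by
    have h1 : δ ≤ ε/(Mc+1) := min_le_right _ _
    have h2 : Mc * δ ≤ Mc * (ε/(Mc+1)) := mul_le_mul_of_nonneg_left h1 hMc0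
    have h3 : Mc * (ε/(Mc+1)) ≤ ε := by
      rw [mul_div_assoc', div_le_iff₀ (by positivity)]
      nlinarith
    exact le_trans h2 h3
  set η : ℝ := 1 / (2*(1 + ∑ j, lam j)) with hηdef
  have hη0 : 0 < η := by positivity
  have hηL : η * (1 + ∑ j, lam j) < 1 := by
    rw [hηdef, div_mul_eq_mul_div, div_lt_one (by positivity)]
    linarith
  obtain ⟨c₀, hc₀, hB₀⟩ := app_EU μ S hSmeas hSnonneg lam hlam N hNmeas hN η hη0 hηL
  have hDu : ∀ j : Fin K, ∃ c : ℝ, 0 < c ∧ ∀ z : ℝ, 0 ≤ z →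
      (μ {ω | z < S ω ∧ (lam j + δ) * S ω < (N j ω : ℝ)}).toReal ≤ Real.exp (-(c * z)) :=
    fun j => app_Dup μ S hSmeas hSnonneg lam hlam N hNmeas hN j δ hδ0
  have hDd : ∀ j : Fin K, ∃ c : ℝ, 0 < c ∧ ∀ z : ℝ, 0 ≤ z →
      (μ {ω | z < S ω ∧ (N j ω : ℝ) < (lam j - δ) * S ω}).toReal ≤ Real.exp (-(c * z)) :=
    fun j => app_Ddown μ S hSmeas hSnonneg lam hlam N hNmeas hN j δ hδ0
  choose cup hcup hcupb using hDu
  choose cdn hcdn hcdnb using hDd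
  -- bounding function
  have hW : Tendsto (fun x => Real.exp (-(c₀ * x)) / (μ {ω | x < (1 + ∑ j, lam j) * S ω}).toReal
      + ∑ j, (Real.exp (-((cup j * η) * x)) / (μ {ω | x < (1 + ∑ j, lam j) * S ω}).toReal
        + Real.exp (-((cdn j * η) * x)) / (μ {ω | x < (1 + ∑ j, lam j) * S ω}).toReal))
      atTop (nhds 0) := by
    have h1 := hsubDen c₀ hc₀
    have h2 : Tendsto (fun x => ∑ j : Fin K,
        (Real.exp (-((cup j * η) * x)) / (μ {ω | x < (1 + ∑ j, lam j) * S ω}).toReal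
          + Real.exp (-((cdn j * η) * x)) / (μ {ω | x < (1 + ∑ j, lam j) * S ω}).toReal))
        atTop (nhds (∑ _j : Fin K, ((0:ℝ) + 0))) := by
      apply tendsto_finset_sum
      intro j _
      exact (hsubDen (cup j * η) (mul_pos (hcup j) hη0)).add (hsubDen (cdn j * η) (mul_pos (hcdn j) hη0))
    have h3 := h1.add h2
    simpa using h3
  -- the squeeze
  have hsq : Tendsto (fun x =>
      (μ {ω | x < S ω + ∑ j, (N j ω : ℝ) ∧
          ε < ‖((S ω / (S ω + ∑ j, (N j ω : ℝ)),
                  fun j => (N j ω : ℝ) / (S ω + ∑ j, (N j ω : ℝ))) :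
                ℝ × (Fin K → ℝ))
              - (1 / (1 + ∑ j, lam j), fun j => lam j / (1 + ∑ j, lam j))‖}).toReal
        / (μ {ω | x < (1 + ∑ j, lam j) * S ω}).toReal) atTop (nhds 0) := by
    apply tendsto_of_tendsto_of_tendsto_of_le_of_le' tendsto_const_nhds hW
    · filter_upwards with x
      have := hDenpos x
      positivity
    · filter_upwards [eventually_ge_atTop (1:ℝ)] with x hx1
      have hx0 : (0:ℝ) ≤ x := by linarith
      have hxpos : (0:ℝ) < x := by linarith
      -- inclusion
      have hincl : {ω | x < S ω + ∑ j, (N j ω : ℝ) ∧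
          ε < ‖((S ω / (S ω + ∑ j, (N j ω : ℝ)),
                  fun j => (N j ω : ℝ) / (S ω + ∑ j, (N j ω : ℝ))) :
                ℝ × (Fin K → ℝ))
              - (1 / (1 + ∑ j, lam j), fun j => lam j / (1 + ∑ j, lam j))‖}
          ⊆ {ω | S ω ≤ η * x ∧ x < S ω + ∑ j, (N j ω : ℝ)}
            ∪ ⋃ j, ({ω | η * x < S ω ∧ (lam j + δ) * S ω < (N j ω : ℝ)}
              ∪ {ω | η * x < S ω ∧ (N j ω : ℝ) < (lam j - δ) * S ω}) := by
        intro ω hω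
        obtain ⟨hT, hnorm⟩ := hω
        by_cases h0 : S ω ≤ η * x
        · left; exact ⟨h0, hT⟩
        · push_neg at h0
          have hSpos : 0 < S ω := lt_trans (by positivity) h0
          by_cases hall : ∀ j, (lam j - δ) * S ω ≤ (N j ω : ℝ)
              ∧ (N j ω : ℝ) ≤ (lam j + δ) * S ω
          · exfalso
            have := geom lam hlam ε δ hε hδ0 hδ1 (by rw [← hMcdef]; exact hδ2)
              (S ω) hSpos (fun j => (N j ω : ℝ)) hall
            exact absurd hnorm (not_lt.2 this)
          · push_neg at hall
            obtain ⟨j, hj⟩ := hall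
            right
            refine Set.mem_iUnion.2 ⟨j, ?_⟩
            by_cases hdown : (lam j - δ) * S ω ≤ (N j ω : ℝ)
            · left
              exact ⟨h0, hj hdown⟩
            · right
              push_neg at hdown
              exact ⟨h0, hdown⟩
      have hmeas := meas_split_many μ hincl
      have hzη : 0 ≤ η * x := by positivity
      have hbd : (μ {ω | x < S ω + ∑ j, (N j ω : ℝ) ∧
          ε < ‖((S ω / (S ω + ∑ j, (N j ω : ℝ)),
                  fun j => (N j ω : ℝ) / (S ω + ∑ j, (N j ω : ℝ))) :
                ℝ × (Fin K → ℝ))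
              - (1 / (1 + ∑ j, lam j), fun j => lam j / (1 + ∑ j, lam j))‖}).toReal
          ≤ Real.exp (-(c₀ * x)) + ∑ j, (Real.exp (-((cup j * η) * x))
            + Real.exp (-((cdn j * η) * x))) := by
        refine le_trans hmeas ?_
        apply add_le_add (hB₀ x hx0)
        apply Finset.sum_le_sum
        intro j _
        apply add_le_add
        · calc (μ {ω | η * x < S ω ∧ (lam j + δ) * S ω < (N j ω : ℝ)}).toReal
              ≤ Real.exp (-(cup j * (η * x))) := hcupb j (η * x) hzη
            _ = Real.exp (-((cup j * η) * x)) := by congr 1; ring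
        · calc (μ {ω | η * x < S ω ∧ (N j ω : ℝ) < (lam j - δ) * S ω}).toReal
              ≤ Real.exp (-(cdn j * (η * x))) := hcdnb j (η * x) hzη
            _ = Real.exp (-((cdn j * η) * x)) := by congr 1; ring
      have := (div_le_div_iff_of_pos_right (hDenpos x)).2 hbd
      refine le_trans this ?_
      rw [add_div, Finset.sum_div]
      apply add_le_add_right
      apply Finset.sum_le_sum
      intro j _
      rw [add_div]
  -- combine with part (a)
  have hDN : Tendsto (fun x => (μ {ω | x < (1 + ∑ j, lam j) * S ω}).toReal
      / (μ {ω | x < S ω + ∑ j, (N j ω : ℝ)}).toReal) atTop (nhds 1) := by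
    have h1 := parta.inv₀ one_ne_zero
    rw [inv_one] at h1
    refine h1.congr ?_
    intro x
    rw [inv_div]
  have hfinal := hsq.mul hDN
  rw [zero_mul] at hfinal
  refine hfinal.congr ?_
  intro x
  rw [div_mul_div_comm, mul_comm
    ((μ {ω | x < S ω + ∑ j, (N j ω : ℝ) ∧
        ε < ‖((S ω / (S ω + ∑ j, (N j ω : ℝ)),
                fun j => (N j ω : ℝ) / (S ω + ∑ j, (N j ω : ℝ))) :
              ℝ × (Fin K → ℝ))
            - (1 / (1 + ∑ j, lam j), fun j => lam j / (1 + ∑ j, lam j))‖}).toReal)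
    ((μ {ω | x < (1 + ∑ j, lam j) * S ω}).toReal),
    mul_div_mul_left _ _ (ne_of_gt (hDenpos x))]
end

section
/- Let λ > 0, let S be a nonnegative random variable, and let N be an ℕ-valued random variable whose conditional distribution given S is Poisson with mean λS. Then for every x > 0 satisfying x − √x > 2λ√x, one has P(S + N > x and S < √x) ≤ P(N' > 2λ√x), where N' is a Poisson random variable with mean λ√x. -/
open MeasureTheory Filter

lemma aux_mono (k : ℕ) (a b : ℝ) (ha : 0 ≤ a) (hab : a ≤ b) (hbk : b ≤ (k : ℝ)) :
    Real.exp (-a) * a ^ k ≤ Real.exp (-b) * b ^ k := by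
  rcases eq_or_lt_of_le ha with h0 | hapos
  · -- a = 0
    rcases eq_or_lt_of_le (h0 ▸ hab) with hb0 | hbpos
    · simp [← h0, ← hb0]
    · have hk : k ≠ 0 := by
        rintro rfl
        simp at hbk; linarith
      rw [← h0, zero_pow hk, mul_zero]
      positivity
  · have hbpos : 0 < b := lt_of_lt_of_le hapos hab
    have hlog : Real.log (a / b) ≤ a / b - 1 :=
      Real.log_le_sub_one_of_pos (by positivity)
    have hlogd : Real.log a - Real.log b ≤ a / b - 1 := by
      rwa [Real.log_div (ne_of_gt hapos) (ne_of_gt hbpos)] at hlog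
    have key : (k : ℝ) * Real.log a - a ≤ (k : ℝ) * Real.log b - b := by
      have h1 : (k : ℝ) * (Real.log b - Real.log a) ≥ (k : ℝ) * (1 - a / b) := by
        apply mul_le_mul_of_nonneg_left (by linarith) (Nat.cast_nonneg k)
      have h2 : (k : ℝ) * (1 - a / b) ≥ b - a := by
        have : (k : ℝ) * (1 - a / b) = (k : ℝ) / b * (b - a) := by
          field_simp
        rw [this]
        have hdb : (1 : ℝ) ≤ (k : ℝ) / b := (one_le_div hbpos).mpr hbk
        nlinarith
      nlinarith
    have pa : a ^ k = Real.exp ((k : ℝ) * Real.log a) := by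
      rw [← Real.log_pow, Real.exp_log (by positivity)]
    have pb : b ^ k = Real.exp ((k : ℝ) * Real.log b) := by
      rw [← Real.log_pow, Real.exp_log (by positivity)]
    have ea : Real.exp (-a) * a ^ k = Real.exp ((k : ℝ) * Real.log a - a) := by
      rw [pa, ← Real.exp_add]; ring_nf
    have eb : Real.exp (-b) * b ^ k = Real.exp ((k : ℝ) * Real.log b - b) := by
      rw [pb, ← Real.exp_add]; ring_nf
    rw [ea, eb]
    exact Real.exp_le_exp.mpr key

/-- `N` is conditionally Poisson with mean `lam * S` given `S`: for every Borel set `A`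
and every `k ∈ ℕ`, `P(S ∈ A, N = k) = E[1_A(S) e^{-λS} (λS)^k / k!]`. -/
def CondPoisson {Ω : Type*} [MeasurableSpace Ω] (μ : Measure Ω)
    (S : Ω → ℝ) (lam : ℝ) (N : Ω → ℕ) : Prop :=
  ∀ A : Set ℝ, MeasurableSet A → ∀ k : ℕ,
    (μ {ω | S ω ∈ A ∧ N ω = k}).toReal
      = ∫ ω, Set.indicator A (fun _ => (1 : ℝ)) (S ω) *
          Real.exp (-lam * S ω) * (lam * S ω) ^ k / (Nat.factorial k) ∂μ

/-- Let `λ > 0`, `S` a nonnegative random variable, and `N`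
conditionally Poisson with mean `λS` given `S`. Then for every `x > 0` with
`x - √x > 2λ√x`, `P(S + N > x, S < √x) ≤ P(N' > 2λ√x)` where `N'` is Poisson with mean
`λ√x` (the Poisson tail being written explicitly as a sum). -/
theorem stmt16 {Ω : Type*} [MeasurableSpace Ω] (μ : Measure Ω)
    [IsProbabilityMeasure μ]
    (lam : ℝ) (hlam : 0 < lam)
    (S : Ω → ℝ) (hSmeas : Measurable S) (hSnonneg : ∀ ω, 0 ≤ S ω)
    (N : Ω → ℕ) (hNmeas : Measurable N) (hN : CondPoisson μ S lam N)
    (x : ℝ) (hx : 0 < x) (hxbig : 2 * lam * Real.sqrt x < x - Real.sqrt x) :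
    (μ {ω | x < S ω + N ω ∧ S ω < Real.sqrt x}).toReal
      ≤ ∑' k : ℕ, if 2 * lam * Real.sqrt x < (k : ℝ) then
          Real.exp (-(lam * Real.sqrt x)) * (lam * Real.sqrt x) ^ k / (Nat.factorial k)
        else 0 := by
  set r := Real.sqrt x with hr
  have hrpos : 0 < r := Real.sqrt_pos.mpr hx
  set m := lam * r with hm
  have hmpos : 0 < m := by positivity
  -- the events
  set F : ℕ → Set Ω := fun k =>
    if 2 * m < (k : ℝ) then {ω | S ω ∈ Set.Iio r ∧ N ω = k} else ∅ with hF
  set g : ℕ → ℝ := fun k =>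
    if 2 * lam * r < (k : ℝ) then Real.exp (-m) * m ^ k / (Nat.factorial k) else 0
    with hg
  have h2m : ∀ k : ℕ, (2 * lam * r < (k : ℝ)) ↔ (2 * m < (k : ℝ)) := by
    intro k; rw [hm]; constructor <;> intro h <;> linarith
  -- g nonneg, summable
  have hgnonneg : ∀ k, 0 ≤ g k := by
    intro k; rw [hg]; dsimp only
    split
    · positivity
    · exact le_refl 0
  have hgsum : Summable g := by
    refine Summable.of_nonneg_of_le hgnonneg ?_
      ((Real.summable_pow_div_factorial m).mul_left (Real.exp (-m)))
    intro k; rw [hg]; dsimp only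
    split
    · rw [mul_div_assoc]
    · positivity
  -- pointwise bound on each event
  have hfg : ∀ k, (μ (F k)).toReal ≤ g k := by
    intro k
    rw [hF, hg]; dsimp only
    by_cases hk : 2 * m < (k : ℝ)
    · rw [if_pos hk, if_pos ((h2m k).mpr hk)]
      rw [hN (Set.Iio r) measurableSet_Iio k]
      set C : ℝ := Real.exp (-m) * m ^ k / (Nat.factorial k) with hC
      have hCpos : 0 < C := by positivity
      set f : Ω → ℝ := fun ω => Set.indicator (Set.Iio r) (fun _ => (1 : ℝ)) (S ω) *
          Real.exp (-lam * S ω) * (lam * S ω) ^ k / (Nat.factorial k) with hf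
      have hfle : ∀ ω, f ω ≤ C := by
        intro ω
        rw [hf]; dsimp only
        by_cases hω : S ω ∈ Set.Iio r
        · rw [Set.indicator_of_mem hω, one_mul]
          have h1 : lam * S ω ≤ m := by
            rw [hm]
            exact mul_le_mul_of_nonneg_left (le_of_lt hω) (le_of_lt hlam)
          have h2 : m ≤ (k : ℝ) := by linarith
          have := aux_mono k (lam * S ω) m (mul_nonneg hlam.le (hSnonneg ω)) h1 h2
          rw [hC]
          apply div_le_div_of_nonneg_right ?_ (by positivity)
          · rw [neg_mul] at *
            exact this
        · rw [Set.indicator_of_notMem hω, zero_mul, zero_mul, zero_div]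
          exact le_of_lt hCpos
      have hfnonneg : ∀ ω, 0 ≤ f ω := by
        intro ω
        rw [hf]; dsimp only
        have h0 : 0 ≤ Set.indicator (Set.Iio r) (fun _ => (1 : ℝ)) (S ω) :=
          Set.indicator_nonneg (fun _ _ => zero_le_one) _
        have h1 : 0 ≤ lam * S ω := mul_nonneg hlam.le (hSnonneg ω)
        positivity
      have hfmeas : Measurable f := by
        rw [hf]
        apply Measurable.div _ measurable_const
        apply Measurable.mul
        · apply Measurable.mul
          · exact (measurable_const.indicator measurableSet_Iio).comp hSmeas
          · exact (hSmeas.const_mul (-lam)).exp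
        · exact ((hSmeas.const_mul lam)).pow measurable_const
      have hfint : Integrable f μ := by
        apply Integrable.mono' (integrable_const C) hfmeas.aestronglyMeasurable
        filter_upwards with ω
        rw [Real.norm_eq_abs, abs_of_nonneg (hfnonneg ω)]
        exact hfle ω
      calc ∫ ω, f ω ∂μ ≤ ∫ _, C ∂μ :=
            integral_mono hfint (integrable_const C) hfle
        _ = C := by simp
    · rw [if_neg hk, if_neg (fun h => hk ((h2m k).mp h))]
      simp
  -- inclusion
  have hincl : {ω | x < S ω + N ω ∧ S ω < r} ⊆ ⋃ k, F k := by
    intro ω hω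
    obtain ⟨h1, h2⟩ := hω
    refine Set.mem_iUnion.mpr ⟨N ω, ?_⟩
    have hk : 2 * m < (N ω : ℝ) := by
      have : (N ω : ℝ) > x - r := by linarith
      rw [hm]; linarith
    rw [hF]; dsimp only
    rw [if_pos hk]
    exact ⟨h2, rfl⟩
  -- measure bound
  have hmeas_le : μ {ω | x < S ω + N ω ∧ S ω < r} ≤ ENNReal.ofReal (∑' k, g k) := by
    calc μ {ω | x < S ω + N ω ∧ S ω < r} ≤ μ (⋃ k, F k) := measure_mono hincl
      _ ≤ ∑' k, μ (F k) := measure_iUnion_le F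
      _ ≤ ∑' k, ENNReal.ofReal (g k) := by
          apply ENNReal.tsum_le_tsum
          intro k
          have hfin : μ (F k) ≠ ⊤ := measure_ne_top μ _
          rw [← ENNReal.ofReal_toReal hfin]
          exact ENNReal.ofReal_le_ofReal (hfg k)
      _ = ENNReal.ofReal (∑' k, g k) :=
          (ENNReal.ofReal_tsum_of_nonneg hgnonneg hgsum).symm
  exact ENNReal.toReal_le_of_le_ofReal (tsum_nonneg hgnonneg) hmeas_le
end

section
/- Let μ₁, μ₂, λ₁₂, λ₂₁ > 0 and θ > 0. Define Δ = (μ₁μ₂ + λ₁₂λ₂₁ + θ² + θ(μ₁ + μ₂ + λ₁₂ + λ₂₁))² − 4 μ₁ μ₂ λ₁₂ λ₂₁, g₁ = (μ₁λ₂₁ − μ₂λ₁₂ + (μ₁ + θ + λ₁₂)(μ₂ + θ + λ₂₁) − √Δ) / (2 λ₂₁ (μ₁ + θ + λ₁₂)), and g₂ = (−μ₁λ₂₁ + μ₂λ₁₂ + (μ₁ + θ + λ₁₂)(μ₂ + θ + λ₂₁) − √Δ) / (2 λ₁₂ (μ₂ + θ + λ₂₁)). Then Δ ≥ 0 and (g₁,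 g₂) satisfies the system g₁ = μ₁/(μ₁ + θ + λ₁₂ − λ₁₂ g₂) and g₂ = μ₂/(μ₂ + θ + λ₂₁ − λ₂₁ g₁). -/
/-- For positive `μ₁, μ₂, λ₁₂, λ₂₁, θ`, with
`Δ = (μ₁μ₂ + λ₁₂λ₂₁ + θ² + θ(μ₁ + μ₂ + λ₁₂ + λ₂₁))² − 4μ₁μ₂λ₁₂λ₂₁`,
the explicit pair `(g₁, g₂)` defined below satisfies `Δ ≥ 0` and the fixed-point
system `g₁ = μ₁/(μ₁ + θ + λ₁₂ − λ₁₂ g₂)`, `g₂ = μ₂/(μ₂ + θ + λ₂₁ − λ₂₁ g₁)`. -/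
theorem stmt17 (μ1 μ2 l12 l21 θ : ℝ)
    (hμ1 : 0 < μ1) (hμ2 : 0 < μ2) (hl12 : 0 < l12) (hl21 : 0 < l21) (hθ : 0 < θ) :
    0 ≤ (μ1 * μ2 + l12 * l21 + θ ^ 2 + θ * (μ1 + μ2 + l12 + l21)) ^ 2
        - 4 * μ1 * μ2 * l12 * l21 ∧
    ((μ1 * l21 - μ2 * l12 + (μ1 + θ + l12) * (μ2 + θ + l21)
        - Real.sqrt ((μ1 * μ2 + l12 * l21 + θ ^ 2 + θ * (μ1 + μ2 + l12 + l21)) ^ 2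
            - 4 * μ1 * μ2 * l12 * l21))
      / (2 * l21 * (μ1 + θ + l12))
      = μ1 / (μ1 + θ + l12 - l12 *
          ((-(μ1 * l21) + μ2 * l12 + (μ1 + θ + l12) * (μ2 + θ + l21)
              - Real.sqrt ((μ1 * μ2 + l12 * l21 + θ ^ 2 + θ * (μ1 + μ2 + l12 + l21)) ^ 2
                  - 4 * μ1 * μ2 * l12 * l21))
            / (2 * l12 * (μ2 + θ + l21))))) ∧
    ((-(μ1 * l21) + μ2 * l12 + (μ1 + θ + l12) * (μ2 + θ + l21)
        - Real.sqrt ((μ1 * μ2 + l12 * l21 + θ ^ 2 + θ * (μ1 + μ2 + l12 + l21)) ^ 2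
            - 4 * μ1 * μ2 * l12 * l21))
      / (2 * l12 * (μ2 + θ + l21))
      = μ2 / (μ2 + θ + l21 - l21 *
          ((μ1 * l21 - μ2 * l12 + (μ1 + θ + l12) * (μ2 + θ + l21)
              - Real.sqrt ((μ1 * μ2 + l12 * l21 + θ ^ 2 + θ * (μ1 + μ2 + l12 + l21)) ^ 2
                  - 4 * μ1 * μ2 * l12 * l21))
            / (2 * l21 * (μ1 + θ + l12))))) := by
  have hA : (0:ℝ) < μ1 + θ + l12 := by linarith
  have hB : (0:ℝ) < μ2 + θ + l21 := by linarith
  have hΔ : 0 ≤ (μ1 * μ2 + l12 * l21 + θ ^ 2 + θ * (μ1 + μ2 + l12 + l21)) ^ 2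
      - 4 * μ1 * μ2 * l12 * l21 := by
    nlinarith [sq_nonneg (μ1 * μ2 - l12 * l21), mul_pos (mul_pos hμ1 hμ2) (mul_pos hl12 hl21),
      mul_pos hμ1 hμ2, mul_pos hl12 hl21, sq_nonneg θ,
      mul_pos hθ (by linarith : (0:ℝ) < μ1 + μ2 + l12 + l21)]
  set S := Real.sqrt ((μ1 * μ2 + l12 * l21 + θ ^ 2 + θ * (μ1 + μ2 + l12 + l21)) ^ 2
      - 4 * μ1 * μ2 * l12 * l21) with hSdef
  have hS2 : S ^ 2 = (μ1 * μ2 + l12 * l21 + θ ^ 2 + θ * (μ1 + μ2 + l12 + l21)) ^ 2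
      - 4 * μ1 * μ2 * l12 * l21 := Real.sq_sqrt hΔ
  have hSnn : 0 ≤ S := Real.sqrt_nonneg _
  have hden2 : μ1 + θ + l12 - l12 *
      ((-(μ1 * l21) + μ2 * l12 + (μ1 + θ + l12) * (μ2 + θ + l21) - S)
        / (2 * l12 * (μ2 + θ + l21)))
      = ((μ1 + θ + l12) * (μ2 + θ + l21) + μ1 * l21 - μ2 * l12 + S)
        / (2 * (μ2 + θ + l21)) := by
    field_simp
    ring
  have hden1 : μ2 + θ + l21 - l21 *
      ((μ1 * l21 - μ2 * l12 + (μ1 + θ + l12) * (μ2 + θ + l21) - S)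
        / (2 * l21 * (μ1 + θ + l12)))
      = ((μ1 + θ + l12) * (μ2 + θ + l21) + μ2 * l12 - μ1 * l21 + S)
        / (2 * (μ1 + θ + l12)) := by
    field_simp
    ring
  have hX2 : 0 < (μ1 + θ + l12) * (μ2 + θ + l21) + μ1 * l21 - μ2 * l12 + S := by
    nlinarith [mul_pos hμ1 hl21, mul_pos hμ1 hμ2, mul_pos hl12 hl21, sq_nonneg θ,
      mul_pos hθ hμ1, mul_pos hθ hμ2, mul_pos hθ hl12, mul_pos hθ hl21]
  have hX1 : 0 < (μ1 + θ + l12) * (μ2 + θ + l21) + μ2 * l12 - μ1 * l21 + S := by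
    nlinarith [mul_pos hμ2 hl12, mul_pos hμ1 hμ2, mul_pos hl12 hl21, sq_nonneg θ,
      mul_pos hθ hμ1, mul_pos hθ hμ2, mul_pos hθ hl12, mul_pos hθ hl21]
  refine ⟨hΔ, ?_, ?_⟩
  · rw [hden2, div_div_eq_mul_div, div_eq_div_iff (by positivity) hX2.ne']
    linear_combination -hS2
  · rw [hden1, div_div_eq_mul_div, div_eq_div_iff (by positivity) hX1.ne']
    linear_combination -hS2
end
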